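/- Let Δ be a compact convex subset of a real topological vector space and let g: Δ → (0,∞] be a positive lower semicontinuous affine function such that there exists a sequence (h_n) of continuous affine functions h_n: Δ → ℝ with h_n(τ) > 0 for all τ ∈ Δ, h_n ≤ h_{n+1} pointwise, and h_n → g pointwise on Δ. Then there exists a sequence (g_n) of continuous affine functions g_n: Δ → ℝ with g_n(τ) > 0 for all τ ∈ Δ such that g(τ) = Σ_{n=1}^∞ g_n(τ) for every τ ∈ Δ (the series converging pointwise, with value ∞ allowed). -/
import Mathlib


open scoped ENNReal

/-- **Proposition.** Let `Δ` be a compact convex subset of a real topological vector space and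
`g : Δ → (0, ∞]` a positive lower semicontinuous affine function which is the pointwise limit
of an increasing sequence of strictly positive continuous affine real-valued functions `hₙ`.
Then `g` is the pointwise sum of a series `Σ gₙ` of strictly positive continuous affine
real-valued functions on `Δ`. -/
theorem lsc_affine_eq_tsum_of_increasing_approx
    {E : Type*} [AddCommGroup E] [Module ℝ E] [TopologicalSpace E]
    (Δ : Set E) (hcomp : IsCompact Δ) (hconv : Convex ℝ Δ)
    (g : Δ → ℝ≥0∞)
    (hgpos : ∀ x, 0 < g x)
    (hglsc : LowerSemicontinuous g)
    (hgaff : ∀ (x y : Δ) (s t : ℝ) (hs : 0 ≤ s) (ht : 0 ≤ t) (hst : s + t = 1),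
      g ⟨s • (x : E) + t • (y : E), hconv x.2 y.2 hs ht hst⟩ =
        ENNReal.ofReal s * g x + ENNReal.ofReal t * g y)
    (h : ℕ → Δ → ℝ)
    (hcont : ∀ n, Continuous (h n))
    (hpos : ∀ n x, 0 < h n x)
    (haff : ∀ (n : ℕ) (x y : Δ) (s t : ℝ) (hs : 0 ≤ s) (ht : 0 ≤ t) (hst : s + t = 1),
      h n ⟨s • (x : E) + t • (y : E), hconv x.2 y.2 hs ht hst⟩ = s * h n x + t * h n y)
    (hmono : ∀ n x, h n x ≤ h (n + 1) x)
    (hlim : ∀ x, g x = ⨆ n : ℕ, ENNReal.ofReal (h n x)) :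
    ∃ gs : ℕ → Δ → ℝ,
      (∀ n, Continuous (gs n)) ∧
      (∀ n x, 0 < gs n x) ∧
      (∀ (n : ℕ) (x y : Δ) (s t : ℝ) (hs : 0 ≤ s) (ht : 0 ≤ t) (hst : s + t = 1),
        gs n ⟨s • (x : E) + t • (y : E), hconv x.2 y.2 hs ht hst⟩ =
          s * gs n x + t * gs n y) ∧
      ∀ x, g x = ∑' n : ℕ, ENNReal.ofReal (gs n x) := by

  classical
  set gs : ℕ → Δ → ℝ := fun n x =>
    Nat.rec (h 0 x / 2) (fun m _ => (h (m + 1) x - h m x) + h 0 x / 2 ^ (m + 2)) n with hgs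
  have gs0 : ∀ x, gs 0 x = h 0 x / 2 := fun x => rfl
  have gsS : ∀ m x, gs (m + 1) x = (h (m + 1) x - h m x) + h 0 x / 2 ^ (m + 2) :=
    fun m x => rfl
  have hmono' : ∀ (m n : ℕ), m ≤ n → ∀ x, h m x ≤ h n x := by
    intro m n hmn x
    induction n with
    | zero => simpa [Nat.le_zero.mp hmn]
    | succ k ih =>
      rcases Nat.lt_or_ge m (k + 1) with hk | hk
      · exact (ih (Nat.lt_succ_iff.mp hk)).trans (hmono k x)
      · have : m = k + 1 := le_antisymm hmn hk
        simp [this]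
  have hpos' : ∀ n x, 0 < gs n x := by
    intro n x
    cases n with
    | zero => simpa [gs0] using (hpos 0 x)
    | succ m =>
      rw [gsS]
      have h1 : 0 ≤ h (m + 1) x - h m x := sub_nonneg.mpr (hmono m x)
      have h2 : 0 < h 0 x / 2 ^ (m + 2) := div_pos (hpos 0 x) (by positivity)
      linarith
  have hsum : ∀ (N : ℕ) (x : Δ),
      ∑ n ∈ Finset.range (N + 1), gs n x = h N x - h 0 x / 2 ^ (N + 1) := by
    intro N x
    induction N with
    | zero => simp [gs0]; ring
    | succ k ih =>
      rw [Finset.sum_range_succ, ih, gsS]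
      ring
  refine ⟨gs, ?_, hpos', ?_, ?_⟩
  · intro n
    cases n with
    | zero =>
      have : (fun x => gs 0 x) = fun x => h 0 x / 2 := rfl
      simpa [this] using (hcont 0).div_const 2
    | succ m =>
      have : (fun x => gs (m + 1) x) =
          fun x => (h (m + 1) x - h m x) + h 0 x / 2 ^ (m + 2) := rfl
      rw [show gs (m+1) = fun x => (h (m + 1) x - h m x) + h 0 x / 2 ^ (m + 2) from rfl]
      exact (((hcont (m + 1)).sub (hcont m)).add ((hcont 0).div_const _))
  · intro n x y s t hs ht hst
    cases n with
    | zero =>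
      rw [gs0, gs0, gs0, haff 0 x y s t hs ht hst]
      ring
    | succ m =>
      rw [gsS, gsS, gsS, haff (m + 1) x y s t hs ht hst, haff m x y s t hs ht hst,
        haff 0 x y s t hs ht hst]
      ring
  · intro x
    rw [hlim x, ENNReal.tsum_eq_iSup_sum' (fun N => Finset.range (N + 1))
      (fun s => ⟨s.sup id, fun n hn => Finset.mem_range.mpr
        (Nat.lt_succ_of_le (Finset.le_sup (f := id) hn))⟩)]
    have key : ∀ N, ∑ n ∈ Finset.range (N + 1), ENNReal.ofReal (gs n x) =
        ENNReal.ofReal (h N x - h 0 x / 2 ^ (N + 1)) := by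
      intro N
      rw [← ENNReal.ofReal_sum_of_nonneg (fun n _ => (hpos' n x).le), hsum]
    simp_rw [key]
    apply le_antisymm
    · -- sup ofReal (h n) ≤ sup ofReal (h N - ...)
      refine iSup_le fun n => ?_
      have hlimit : Filter.Tendsto (fun N : ℕ =>
          ENNReal.ofReal (h n x - h 0 x / 2 ^ (N + 1))) Filter.atTop
          (nhds (ENNReal.ofReal (h n x))) := by
        have h1 : Filter.Tendsto (fun N : ℕ => h n x - h 0 x / 2 ^ (N + 1))
            Filter.atTop (nhds (h n x)) := by
          have h2 : Filter.Tendsto (fun N : ℕ => h 0 x / 2 ^ (N + 1))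
              Filter.atTop (nhds 0) := by
            simp_rw [div_eq_mul_inv, ← inv_pow]
            have := tendsto_pow_atTop_nhds_zero_of_lt_one
              (by norm_num : (0:ℝ) ≤ (2:ℝ)⁻¹) (by norm_num : (2:ℝ)⁻¹ < 1)
            have := (this.comp (Filter.tendsto_add_atTop_nat 1)).const_mul (h 0 x)
            simpa using this
          simpa using (tendsto_const_nhds (x := h n x)).sub h2
        exact (ENNReal.continuous_ofReal.tendsto _).comp h1
      refine le_of_tendsto hlimit ?_
      filter_upwards [Filter.eventually_ge_atTop n] with N hN
      calc ENNReal.ofReal (h n x - h 0 x / 2 ^ (N + 1))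
          ≤ ENNReal.ofReal (h N x - h 0 x / 2 ^ (N + 1)) := by
            apply ENNReal.ofReal_le_ofReal
            have := hmono' n N hN x
            linarith
        _ ≤ ⨆ M, ENNReal.ofReal (h M x - h 0 x / 2 ^ (M + 1)) := le_iSup (fun M : ℕ => ENNReal.ofReal (h M x - h 0 x / 2 ^ (M + 1))) N
    · refine iSup_le fun N => ?_
      calc ENNReal.ofReal (h N x - h 0 x / 2 ^ (N + 1))
          ≤ ENNReal.ofReal (h N x) := by
            apply ENNReal.ofReal_le_ofReal
            have : 0 ≤ h 0 x / 2 ^ (N + 1) := le_of_lt (div_pos (hpos 0 x) (by positivity))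
            linarith
        _ ≤ ⨆ n, ENNReal.ofReal (h n x) := le_iSup (fun n : ℕ => ENNReal.ofReal (h n x)) N
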